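/- arXiv:1611.04796 — 3 statements merged into one kernel-verified Lean document; each statement's English description precedes it below -/
import Mathlib

section
/- Let V be a free module of rank N over 𝔬_r = 𝔬/𝔭^r (𝔬 a complete DVR with finite residue field, 𝔭 its maximal ideal, r ≥ 1), and let V = V_0 ⊃ V_1 ⊃ ⋯ ⊃ V_e = 0 be a flag of 𝔬_r-submodules with each V_i free for 0 ≤ i ≤ e−1. Define L_{i+ej} = 𝔭^j(V_i + 𝔭V) for 0 ≤ i ≤ e−1 and j ≥ 0. Then V = L_0 ⊃ L_1 ⊃ ⋯ ⊃ L_{er} = 0 is a strictly decreasing chain of 𝔬_r-submodules. -/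
/-!
Let `𝔭 = (ϖ)` in `𝔬_r`. For `n = i + e j` with `i < e`, `j < r`, the step `L (n + 1) ⊆ L n`
is `𝔭^j (V_{i+1} + 𝔭V) ⊆ 𝔭^j (V_i + 𝔭V)` (for `i = e - 1` because `V_e = 0`). Multiplication
by `ϖ^j` is injective on submodules containing `𝔭V`, since in a free `𝔬_r`-module the kernel
of `ϖ^j` lies in `𝔭V` when `j < r`. It remains to see `V_{i+1} + 𝔭V ≠ V_i + 𝔭V`: otherwise
`V_i ⊆ V_{i+1} + (V_i ∩ 𝔭V)`, and `V_i ∩ 𝔭V = 𝔭V_i` because `V_i` is free and `ϖ^{r-1}` kills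
`𝔭V`; Nakayama's lemma for the nilpotent ideal `𝔭` then forces `V_i = V_{i+1}`.
-/

open IsLocalRing Pointwise

namespace Submodule

variable {R M : Type*} [CommRing R] [AddCommGroup M] [Module R M]

theorem mem_ideal_smul_top_of_smul_eq_zero [Module.Free R M] {a : R} {I : Ideal R}
    (hI : ∀ c : R, a * c = 0 → c ∈ I) {m : M} (hm : a • m = 0) :
    m ∈ I • (⊤ : Submodule R M) := by
  let b := Module.Free.chooseBasis R M
  rw [← b.linearCombination_repr m, Finsupp.linearCombination_apply]
  refine Submodule.finsuppSum_mem R _ _ _ fun t _ => smul_mem_smul (hI _ ?_) mem_top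
  simpa using congrArg (b.repr · t) hm

theorem le_sup_pow_smul_of_le_sup_smul {I : Ideal R} {W W' : Submodule R M}
    (h : W ≤ W' ⊔ I • W) (n : ℕ) : W ≤ W' ⊔ I ^ n • W := by
  induction n with
  | zero => simp
  | succ n ih =>
    calc W ≤ W' ⊔ I • W := h
      _ ≤ W' ⊔ I • (W' ⊔ I ^ n • W) := sup_le_sup_left (smul_mono_right _ ih) _
      _ = W' ⊔ I • W' ⊔ I ^ (n + 1) • W := by rw [smul_sup, ← sup_assoc, pow_succ', mul_smul]
      _ ≤ W' ⊔ I ^ (n + 1) • W := sup_le_sup_right (sup_le le_rfl smul_le_right) _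

theorem le_of_le_sup_smul_of_pow_eq_bot {I : Ideal R} {n : ℕ} (hI : I ^ n = ⊥)
    {W W' : Submodule R M} (h : W ≤ W' ⊔ I • W) : W ≤ W' := by
  simpa [hI] using le_sup_pow_smul_of_le_sup_smul h n

theorem inf_smul_top_le_smul {I : Ideal R} {k : ℕ} {a : R} (hI : I ^ (k + 1) = ⊥)
    (ha : a ∈ I ^ k) (hann : ∀ c : R, a * c = 0 → c ∈ I) (W : Submodule R M) [Module.Free R W] :
    W ⊓ I • ⊤ ≤ I • W := by
  rintro x ⟨hxW, hxI⟩
  have hax : a • x = 0 := by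
    have : a • x ∈ I ^ (k + 1) • (⊤ : Submodule R M) := by
      rw [pow_succ, mul_smul]; exact smul_mem_smul ha hxI
    simpa [hI] using this
  have hx := mem_map_of_mem (f := W.subtype)
    (mem_ideal_smul_top_of_smul_eq_zero hann (m := (⟨x, hxW⟩ : W)) (Subtype.ext hax))
  rwa [map_smul'', map_subtype_top] at hx

theorem sup_smul_top_lt_sup_smul_top {I : Ideal R} {k : ℕ} {a : R} (hI : I ^ (k + 1) = ⊥)
    (ha : a ∈ I ^ k) (hann : ∀ c : R, a * c = 0 → c ∈ I) {W W' : Submodule R M} [Module.Free R W]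
    (h : W' < W) : W' ⊔ I • ⊤ < W ⊔ I • ⊤ := by
  refine lt_of_le_of_ne (sup_le_sup_right h.le _) fun heq => h.not_ge ?_
  refine le_of_le_sup_smul_of_pow_eq_bot hI ?_
  calc W = (W' ⊔ I • ⊤) ⊓ W := by rw [heq, inf_eq_right.mpr le_sup_left]
    _ = W' ⊔ I • ⊤ ⊓ W := sup_inf_assoc_of_le _ h.le
    _ ≤ W' ⊔ I • W := sup_le_sup_left (inf_comm W _ ▸ inf_smul_top_le_smul hI ha hann W) _

theorem pointwise_smul_lt_pointwise_smul [Module.Free R M] {a : R} {I : Ideal R}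
    (hann : ∀ c : R, a * c = 0 → c ∈ I) {A B : Submodule R M} (hA : I • ⊤ ≤ A) (hAB : A < B) :
    a • A < a • B := by
  refine lt_of_le_of_ne (smul_mono_right a hAB.le) fun heq => hAB.not_ge fun x hx => ?_
  obtain ⟨y, hy, hxy⟩ := (mem_smul_pointwise_iff_exists _ _ _).mp
    (heq ▸ smul_mem_pointwise_smul x a B hx)
  have hxy : x - y ∈ A :=
    hA (mem_ideal_smul_top_of_smul_eq_zero hann (by rw [smul_sub, hxy, sub_self]))
  simpa using A.add_mem hxy hy

end Submodule

theorem IsLocalRing.mem_map_maximalIdeal_of_mul_eq_zero {O : Type*} [CommRing O] [IsLocalRing O]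
    {J : Ideal O} {a : O} (ha : a ∉ J) {c : O ⧸ J} (hc : Ideal.Quotient.mk J a * c = 0) :
    c ∈ (maximalIdeal O).map (Ideal.Quotient.mk J) := by
  obtain ⟨c, rfl⟩ := Ideal.Quotient.mk_surjective c
  refine Ideal.mem_map_of_mem _ (by_contra fun hc' => ha ?_)
  rw [← map_mul, Ideal.Quotient.eq_zero_iff_mem] at hc
  exact (Ideal.mul_unit_mem_iff_mem J (IsLocalRing.notMem_maximalIdeal.mp hc')).mp hc

theorem Irreducible.pow_mem_maximalIdeal_pow_iff {O : Type*} [CommRing O] [IsDomain O]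
    [IsDiscreteValuationRing O] {ϖ : O} (hϖ : Irreducible ϖ) {j r : ℕ} :
    ϖ ^ j ∈ maximalIdeal O ^ r ↔ r ≤ j := by
  rw [hϖ.maximalIdeal_eq, Ideal.span_singleton_pow, Ideal.mem_span_singleton,
    pow_dvd_pow_iff hϖ.ne_zero hϖ.not_isUnit]

theorem statement_0_general
    {O : Type*} [CommRing O] [IsDomain O] [IsDiscreteValuationRing O]
    (r : ℕ)
    (V : Type*) [AddCommGroup V] [Module (O ⧸ (maximalIdeal O ^ r)) V]
    (N : ℕ) (bV : Module.Basis (Fin N) (O ⧸ (maximalIdeal O ^ r)) V)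
    (e : ℕ) (he : 1 ≤ e)
    (Vflag : ℕ → Submodule (O ⧸ (maximalIdeal O ^ r)) V)
    (h0 : Vflag 0 = ⊤) (hetop : Vflag e = ⊥)
    (hstrict : ∀ i < e, Vflag (i + 1) < Vflag i)
    (hfree : ∀ i ≤ e - 1, Module.Free (O ⧸ (maximalIdeal O ^ r)) (Vflag i))
    (pr : Ideal (O ⧸ (maximalIdeal O ^ r)))
    (hpr : pr = Ideal.map (Ideal.Quotient.mk (maximalIdeal O ^ r)) (maximalIdeal O))
    (L : ℕ → Submodule (O ⧸ (maximalIdeal O ^ r)) V)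
    (hL : ∀ i < e, ∀ j : ℕ, L (i + e * j) = (pr ^ j) • (Vflag i ⊔ pr • (⊤ : Submodule _ V))) :
    L 0 = ⊤ ∧ L (e * r) = ⊥ ∧ ∀ n < e * r, L (n + 1) < L n := by
  obtain ⟨ϖ, hϖ⟩ := IsDiscreteValuationRing.exists_irreducible O
  set p := Ideal.Quotient.mk (maximalIdeal O ^ r) ϖ
  have hpr_span : pr = Ideal.span {p} := by
    rw [hpr, ← Set.image_singleton, ← Ideal.map_span]
    exact congrArg _ hϖ.maximalIdeal_eq
  have hpr_pow : pr ^ r = ⊥ := by rw [hpr, ← Ideal.map_pow, Ideal.map_quotient_self]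
  have hpr_smul (j : ℕ) (A : Submodule (O ⧸ maximalIdeal O ^ r) V) : pr ^ j • A = p ^ j • A := by
    rw [hpr_span, Ideal.span_singleton_pow, Submodule.ideal_span_singleton_smul]
  have hann {j : ℕ} (hj : j < r) (c : O ⧸ maximalIdeal O ^ r) (hc : p ^ j * c = 0) : c ∈ pr :=
    hpr ▸ mem_map_maximalIdeal_of_mul_eq_zero
      (hϖ.pow_mem_maximalIdeal_pow_iff.not.mpr (Nat.not_le.mpr hj)) (by rwa [map_pow])
  have hL0 := hL 0 (by omega)
  refine ⟨by simpa [h0] using hL0 0, by simpa [hpr_pow] using hL0 r, fun n hn => ?_⟩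
  obtain ⟨i, j, hi, hj, rfl⟩ : ∃ i j, i < e ∧ j < r ∧ n = i + e * j :=
    ⟨n % e, n / e, Nat.mod_lt _ (by omega), Nat.div_lt_of_lt_mul hn, (Nat.mod_add_div n e).symm⟩
  have hnext : L (i + e * j + 1) = pr ^ j • (Vflag (i + 1) ⊔ pr • ⊤) := by
    obtain h | h : i + 1 < e ∨ i + 1 = e := by omega
    · rw [add_right_comm]; exact hL _ h j
    · rw [show i + e * j + 1 = 0 + e * (j + 1) by subst h; ring, hL0, h0, top_sup_eq, pow_succ,
        Submodule.mul_smul, h, hetop, bot_sup_eq]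
  have := hfree i (by omega)
  have := Module.Free.of_basis bV
  rw [hL i hi j, hnext, hpr_smul, hpr_smul]
  refine Submodule.pointwise_smul_lt_pointwise_smul (hann hj) le_sup_right ?_
  obtain ⟨k, rfl⟩ : ∃ k, r = k + 1 := ⟨r - 1, by omega⟩
  exact Submodule.sup_smul_top_lt_sup_smul_top hpr_pow (Ideal.pow_mem_pow
    (hpr_span ▸ Ideal.mem_span_singleton_self p) k)
    (hann k.lt_add_one) (hstrict i hi)

/-- The lattice chain `L` attached to a flag of free submodules of a free
`𝔬_r`-module is a strictly decreasing chain from `V = L 0` down to `L (e*r) = 0`. -/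
theorem statement_0
    {O : Type*} [CommRing O] [IsDomain O] [IsDiscreteValuationRing O]
    [Finite (IsLocalRing.ResidueField O)]
    (r : ℕ) (hr : 1 ≤ r)
    (V : Type*) [AddCommGroup V] [Module (O ⧸ (maximalIdeal O ^ r)) V]
    (N : ℕ) (bV : Module.Basis (Fin N) (O ⧸ (maximalIdeal O ^ r)) V)
    (e : ℕ) (he : 1 ≤ e)
    (Vflag : ℕ → Submodule (O ⧸ (maximalIdeal O ^ r)) V)
    (h0 : Vflag 0 = ⊤) (hetop : Vflag e = ⊥)
    (hstrict : ∀ i < e, Vflag (i + 1) < Vflag i)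
    (hfree : ∀ i ≤ e - 1, Module.Free (O ⧸ (maximalIdeal O ^ r)) (Vflag i))
    (pr : Ideal (O ⧸ (maximalIdeal O ^ r)))
    (hpr : pr = Ideal.map (Ideal.Quotient.mk (maximalIdeal O ^ r)) (maximalIdeal O))
    (L : ℕ → Submodule (O ⧸ (maximalIdeal O ^ r)) V)
    (hL : ∀ i < e, ∀ j : ℕ, L (i + e * j) = (pr ^ j) • (Vflag i ⊔ pr • (⊤ : Submodule _ V))) :
    L 0 = ⊤ ∧ L (e * r) = ⊥ ∧ ∀ n < e * r, L (n + 1) < L n :=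
  statement_0_general r V N bV e he Vflag h0 hetop hstrict hfree pr hpr L hL
end

section
/- Let G be a finite group, N ◁ G with G/N elementary abelian p-group, and χ a G-stable one-dimensional character of N. Define h_χ(xN, yN) = χ([x,y]); this is a well-defined alternating bilinear form on G/N. If h_χ is non-degenerate, then there exists a unique irreducible representation η of G whose restriction to N contains χ, and dim η = [G:N]^{1/2}. -/
open CategoryTheory Limits Module
open scoped commutatorElement

universe u

/-!
Stability of `χ` under conjugation makes `χ ∘ ⁅·, ·⁆` behave like a bilinear form: the identities
`⁅x, yz⁆ = ⁅x, y⁆ · y⁅x, z⁆y⁻¹` and `⁅xy, z⁆ = x⁅y, z⁆x⁻¹ · ⁅x, z⁆` give bilinearity, and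
`⁅x, n⁆ = (xnx⁻¹)n⁻¹` shows that it is trivial on `N`, hence defined on `G/N`.

Let `V` be a representation on which `N` acts through `χ`. For `g ∉ N` non-degeneracy gives `y`
with `χ ⁅y, g⁆ ≠ 1`, and `ygy⁻¹ = ⁅y, g⁆g` forces the character of `V` to vanish at `g`. Hence
`∑ g, χ_V(g) χ_W(g⁻¹) = |N| dim V dim W` for any two such representations, and orthonormality
of irreducible characters yields `(dim V)² = [G : N]` and uniqueness. Some simple `V` of this
kind exists: any simple subrepresentation of the representation coinduced from `χ`. A simple `W`
containing `χ` is of this kind, since the `χ`-eigenspace is a subrepresentation.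
-/

section CommutatorPairing

variable {G A : Type*} [Group G] [CommGroup A] {N : Subgroup G} (hN : N.Normal) (χ : N →* A)
  (hstab : ∀ (g n : G) (hn : n ∈ N), χ ⟨g * n * g⁻¹, hN.conj_mem n hn g⟩ = χ ⟨n, hn⟩)
  (hab : ∀ x y : G, ⁅x, y⁆ ∈ N)
include hstab

theorem map_commutator_mul_right (x y z : G) :
    χ ⟨⁅x, y * z⁆, hab x (y * z)⟩ = χ ⟨⁅x, y⁆, hab x y⟩ * χ ⟨⁅x, z⁆, hab x z⟩ := by
  have h : (⟨⁅x, y * z⁆, hab x (y * z)⟩ : N) =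
      ⟨⁅x, y⁆, hab x y⟩ * ⟨y * ⁅x, z⁆ * y⁻¹, hN.conj_mem _ (hab x z) y⟩ :=
    Subtype.ext (by simp only [Subgroup.coe_mul, commutatorElement_def]; group)
  rw [h, map_mul, hstab]

theorem map_commutator_mul_left (x y z : G) :
    χ ⟨⁅x * y, z⁆, hab (x * y) z⟩ = χ ⟨⁅x, z⁆, hab x z⟩ * χ ⟨⁅y, z⁆, hab y z⟩ := by
  have h : (⟨⁅x * y, z⁆, hab (x * y) z⟩ : N) =
      ⟨x * ⁅y, z⁆ * x⁻¹, hN.conj_mem _ (hab y z) x⟩ * ⟨⁅x, z⁆, hab x z⟩ :=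
    Subtype.ext (by simp only [Subgroup.coe_mul, commutatorElement_def]; group)
  rw [h, map_mul, hstab, mul_comm]

theorem map_commutator_of_mem_right (x : G) {n : G} (hn : n ∈ N) :
    χ ⟨⁅x, n⁆, hab x n⟩ = 1 := by
  have h : (⟨⁅x, n⁆, hab x n⟩ : N) = ⟨x * n * x⁻¹, hN.conj_mem n hn x⟩ * (⟨n, hn⟩ : N)⁻¹ :=
    Subtype.ext (commutatorElement_def x n)
  rw [h, map_mul, map_inv, hstab x n hn, mul_inv_cancel]

theorem map_commutator_of_mem_left {n : G} (hn : n ∈ N) (y : G) :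
    χ ⟨⁅n, y⁆, hab n y⟩ = 1 := by
  have h : (⟨⁅n, y⁆, hab n y⟩ : N) = (⟨⁅y, n⁆, hab y n⟩ : N)⁻¹ :=
    Subtype.ext (commutatorElement_inv y n).symm
  rw [h, map_inv, map_commutator_of_mem_right hN χ hstab hab y hn, inv_one]

theorem map_commutator_eq_of_inv_mul_mem {x x' y y' : G} (hx : x⁻¹ * x' ∈ N)
    (hy : y⁻¹ * y' ∈ N) : χ ⟨⁅x, y⁆, hab x y⟩ = χ ⟨⁅x', y'⁆, hab x' y'⟩ := by
  obtain ⟨m, hm, rfl⟩ : ∃ m ∈ N, x' = x * m := ⟨_, hx, by group⟩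
  obtain ⟨n, hn, rfl⟩ : ∃ n ∈ N, y' = y * n := ⟨_, hy, by group⟩
  rw [map_commutator_mul_left hN χ hstab hab, map_commutator_mul_right hN χ hstab hab,
    map_commutator_mul_right hN χ hstab hab, map_commutator_of_mem_right hN χ hstab hab x hn,
    map_commutator_of_mem_left hN χ hstab hab hm, map_commutator_of_mem_left hN χ hstab hab hm]
  simp

end CommutatorPairing

namespace FDRep

variable {k : Type*} [Field k] {G : Type*} [Monoid G]

theorem hom_comm_apply {X Y : FDRep k G} (f : X ⟶ Y) (g : G) (x : X) :
    f.hom (X.ρ g x) = Y.ρ g (f.hom x) :=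
  congr($(f.comm g).hom.hom x)

theorem mono_iff_injective {X Y : FDRep k G} (f : X ⟶ Y) : Mono f ↔ Function.Injective f.hom :=
  ⟨fun _ => (Rep.mono_iff_injective ((forget₂ (FDRep k G) (Rep k G)).map f)).1 inferInstance,
    fun h => (forget₂ (FDRep k G) (Rep k G)).mono_of_mono_map
      ((Rep.mono_iff_injective _).2 h)⟩

theorem isIso_of_mono_of_finrank_eq {X Y : FDRep k G} (f : X ⟶ Y) [Mono f]
    (h : finrank k X = finrank k Y) : IsIso f := by
  have hinj : Function.Injective f.hom := (mono_iff_injective f).1 inferInstance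
  have hsurj : Function.Surjective f.hom :=
    (LinearMap.injective_iff_surjective_of_finrank_eq_finrank (f := f.hom.hom.hom) h).1 hinj
  have : IsIso ((forget (FDRep k G)).map f) := (isIso_iff_bijective _).2 ⟨hinj, hsurj⟩
  exact isIso_of_reflects_iso f (forget _)

instance isArtinianObject (V : FDRep k G) : IsArtinianObject V := by
  refine ⟨StrictMono.wellFoundedLT (f := fun S : Subobject V => finrank k (S : FDRep k G)) ?_⟩
  intro S T hST
  let f := Subobject.ofLE S T hST.le
  refine (LinearMap.finrank_le_finrank_of_injective (f := f.hom.hom.hom)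
    ((mono_iff_injective f).1 inferInstance)).lt_of_ne fun h => hST.ne ?_
  have := isIso_of_mono_of_finrank_eq f h
  exact le_antisymm hST.le (Subobject.le_of_comm (inv f) (by simp [f]))

theorem not_isZero_of_ne_zero {V : FDRep k G} {v : V} (hv : v ≠ 0) : ¬ IsZero V :=
  fun h => hv congr(($(h.eq_of_src (𝟙 V) 0)).hom v)

instance nontrivial_of_simple (V : FDRep k G) [Simple V] : Nontrivial V := by
  by_contra h
  rw [not_nontrivial_iff_subsingleton] at h
  exact id_nonzero V (by ext; exact Subsingleton.elim _ _)

def subrepresentationι (V : FDRep k G) (σ : Subrepresentation V.ρ) :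
    FDRep.of σ.toRepresentation ⟶ V :=
  ⟨FGModuleCat.ofHom σ.toSubmodule.subtype, fun _ => rfl⟩

theorem toSubmodule_eq_top_of_simple {V : FDRep k G} [Simple V] (σ : Subrepresentation V.ρ)
    (hσ : σ.toSubmodule ≠ ⊥) : σ.toSubmodule = ⊤ := by
  obtain ⟨v, hv, hv0⟩ := Submodule.exists_mem_ne_zero_of_ne_bot hσ
  have : Mono (subrepresentationι V σ) := (mono_iff_injective _).2 Subtype.val_injective
  have : IsIso (subrepresentationι V σ) :=
    isIso_of_mono_of_nonzero fun h => hv0 congr(($h).hom ⟨v, hv⟩)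
  refine eq_top_iff.2 fun u _ => ?_
  obtain ⟨u', rfl⟩ := (ConcreteCategory.bijective_of_isIso (subrepresentationι V σ)).2 u
  exact u'.2

end FDRep

namespace Representation

variable {k G : Type*} [Field k] [Group G] {N : Subgroup G}

def ofChar (χ : N →* kˣ) : Representation k N k :=
  ((Algebra.lmul k k : k →ₐ[k] Module.End k k) : k →* Module.End k k).comp
    ((Units.coeHom k).comp χ)

theorem exists_coindV_ofChar_ne_zero (χ : N →* kˣ) :
    ∃ f : coindV N.subtype (ofChar χ), f ≠ 0 := by
  classical
  refine ⟨⟨fun g => if h : g ∈ N then (χ ⟨g, h⟩ : k) else 0, fun n g => ?_⟩, fun h => ?_⟩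
  change (if h : (n : G) * g ∈ N then (χ ⟨_, h⟩ : k) else 0) =
    χ n * if h : g ∈ N then (χ ⟨g, h⟩ : k) else 0
  by_cases hg : g ∈ N
  · rw [dif_pos (mul_mem n.2 hg), dif_pos hg, ← Units.val_mul, ← map_mul]
    rfl
  · rw [dif_neg ((N.mul_mem_cancel_left n.2).not.2 hg), dif_neg hg, mul_zero]
  · simpa using congr($h.1 1)

variable (hN : N.Normal) (χ : N →* kˣ)
  (hstab : ∀ (g n : G) (hn : n ∈ N), χ ⟨g * n * g⁻¹, hN.conj_mem n hn g⟩ = χ ⟨n, hn⟩)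
include hstab

theorem coind_ofChar_apply_of_mem (n : N) (f : coindV N.subtype (ofChar χ)) :
    coind N.subtype (ofChar χ) n f = (χ n : k) • f := by
  ext x
  calc f.1 (x * n) = f.1 (N.subtype ⟨x * n * x⁻¹, hN.conj_mem n n.2 x⟩ * x) := by simp
    _ = χ ⟨x * n * x⁻¹, hN.conj_mem n n.2 x⟩ * f.1 x := f.2 _ x
    _ = χ n * f.1 x := by rw [hstab]

variable {V : Type*} [AddCommGroup V] [Module k V] (ρ : Representation k G V)

def charEigenspace : Subrepresentation ρ where
  toSubmodule :=
    { carrier := {v | ∀ n : N, ρ n v = (χ n : k) • v}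
      add_mem' := fun ha hb n => by rw [map_add, ha n, hb n, smul_add]
      zero_mem' := fun n => by rw [map_zero, smul_zero]
      smul_mem' := fun c v hv n => by rw [map_smul, hv n, smul_comm] }
  apply_mem_toSubmodule g v hv n := by
    have hconj := hv ⟨g⁻¹ * n * g⁻¹⁻¹, hN.conj_mem n n.2 g⁻¹⟩
    rw [hstab] at hconj
    calc ρ n (ρ g v) = ρ g (ρ (g⁻¹ * n * g⁻¹⁻¹) v) := by
          rw [← Module.End.mul_apply, ← map_mul, ← Module.End.mul_apply, ← map_mul]; group
      _ = (χ n : k) • ρ g v := by rw [hconj, map_smul]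

end Representation

namespace FDRep

variable {k G : Type u} [Field k] [Group G] {N : Subgroup G} {χ : N →* kˣ}

section Existence

variable (hN : N.Normal)
  (hstab : ∀ (g n : G) (hn : n ∈ N), χ ⟨g * n * g⁻¹, hN.conj_mem n hn g⟩ = χ ⟨n, hn⟩)
include hstab

theorem exists_simple_forall_ρ_eq_smul [Finite G] :
    ∃ V : FDRep k G, Simple V ∧ ∀ (n : N) (v : V), V.ρ n v = (χ n : k) • v := by
  let I := FDRep.of (Representation.coind N.subtype (Representation.ofChar χ))
  obtain ⟨f, hf⟩ := Representation.exists_coindV_ofChar_ne_zero χ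
  obtain ⟨S, hS⟩ := exists_simple_subobject (not_isZero_of_ne_zero (V := I) hf)
  refine ⟨S, hS, fun n v => (mono_iff_injective S.arrow).1 inferInstance ?_⟩
  rw [hom_comm_apply, map_smul]
  exact Representation.coind_ofChar_apply_of_mem hN χ hstab n _

theorem forall_ρ_eq_smul_of_simple {W : FDRep k G} [Simple W] {w : W} (hw : w ≠ 0)
    (hwχ : ∀ n : N, W.ρ n w = (χ n : k) • w) (n : N) (v : W) : W.ρ n v = (χ n : k) • v := by
  let E := Representation.charEigenspace hN χ hstab W.ρ
  have hE : E.toSubmodule = ⊤ :=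
    toSubmodule_eq_top_of_simple E ((Submodule.ne_bot_iff _).2 ⟨w, hwχ, hw⟩)
  exact (hE ▸ Submodule.mem_top : v ∈ E.toSubmodule) n

end Existence

section Character

variable {V W : FDRep k G} (hV : ∀ (n : N) (v : V), V.ρ n v = (χ n : k) • v)
  (hW : ∀ (n : N) (w : W), W.ρ n w = (χ n : k) • w)
include hV

theorem character_mul_of_mem (n : N) (g : G) : V.character (n * g) = χ n * V.character g := by
  have : V.ρ (n * g) = (χ n : k) • V.ρ g := by
    ext v
    rw [map_mul, Module.End.mul_apply, hV]
    rfl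
  rw [character, this, map_smul, smul_eq_mul]
  rfl

theorem character_of_mem (n : N) : V.character n = χ n * finrank k V := by
  simpa using character_mul_of_mem hV n 1

theorem character_eq_zero_of_notMem (hab : ∀ x y : G, ⁅x, y⁆ ∈ N)
    (hnd : ∀ x : G, (∀ y : G, χ ⟨⁅x, y⁆, hab x y⟩ = 1) → x ∈ N) {g : G} (hg : g ∉ N) :
    V.character g = 0 := by
  obtain ⟨y, hy⟩ : ∃ y, χ ⟨⁅y, g⁆, hab y g⟩ ≠ 1 := by
    by_contra! h
    refine hg (hnd g fun y => ?_)
    rw [show (⟨⁅g, y⁆, hab g y⟩ : N) = ⟨⁅y, g⁆, hab y g⟩⁻¹ from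
      Subtype.ext (commutatorElement_inv y g).symm, map_inv, h y, inv_one]
  have hconj : y * g * y⁻¹ = ⁅y, g⁆ * g := by simp [commutatorElement_def]
  have h := character_mul_of_mem hV ⟨_, hab y g⟩ g
  rw [← hconj, char_conj] at h
  have : ((χ ⟨_, hab y g⟩ : k) - 1) * V.character g = 0 := by linear_combination -h
  exact (mul_eq_zero.1 this).resolve_left (sub_ne_zero.2 fun h1 => hy (Units.ext h1))

include hW in
theorem sum_character_mul_character_inv [Fintype G] (hab : ∀ x y : G, ⁅x, y⁆ ∈ N)
    (hnd : ∀ x : G, (∀ y : G, χ ⟨⁅x, y⁆, hab x y⟩ = 1) → x ∈ N) :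
    ∑ g : G, V.character g * W.character g⁻¹ = Nat.card N * finrank k V * finrank k W := by
  classical
  have hsummand (g : G) : V.character g * W.character g⁻¹ =
      if g ∈ N then (finrank k V * finrank k W : k) else 0 := by
    by_cases hg : g ∈ N
    · rw [if_pos hg, character_of_mem hV ⟨g, hg⟩,
        show g⁻¹ = ((⟨g, hg⟩⁻¹ : N) : G) from rfl, character_of_mem hW, map_inv,
        mul_mul_mul_comm, Units.mul_inv, one_mul]
    · rw [if_neg hg, character_eq_zero_of_notMem hV hab hnd hg, zero_mul]
  rw [Finset.sum_congr rfl fun g _ => hsummand g, Finset.sum_ite, Finset.sum_const_zero,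
    add_zero, Finset.sum_const, nsmul_eq_mul, mul_assoc, Nat.card_eq_fintype_card,
    Fintype.card_subtype]

end Character

section Orthogonality

variable [IsAlgClosed k] [CharZero k] [Finite G] (hab : ∀ x y : G, ⁅x, y⁆ ∈ N)
  (hnd : ∀ x : G, (∀ y : G, χ ⟨⁅x, y⁆, hab x y⟩ = 1) → x ∈ N)
  {V W : FDRep k G} [Simple V] [Simple W] (hV : ∀ (n : N) (v : V), V.ρ n v = (χ n : k) • v)
  (hW : ∀ (n : N) (w : W), W.ρ n w = (χ n : k) • w)
include hnd hV hW

open scoped Classical in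
theorem card_mul_finrank_mul_finrank_eq :
    (Nat.card N * finrank k V * finrank k W : k) =
      if Nonempty (V ≅ W) then (Nat.card G : k) else 0 := by
  have := Fintype.ofFinite G
  have hG : (Nat.card G : k) ≠ 0 := Nat.cast_ne_zero.2 Nat.card_pos.ne'
  have := invertibleOfNonzero hG
  have h := char_orthonormal V W
  rw [sum_character_mul_character_inv hV hW hab hnd] at h
  rw [← mul_inv_cancel_left₀ hG (_ * _), h]
  split_ifs <;> simp

omit hW in
theorem finrank_sq_eq_index : finrank k V ^ 2 = N.index := by
  have h := card_mul_finrank_mul_finrank_eq hab hnd hV hV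
  rw [if_pos ⟨Iso.refl V⟩, ← N.card_mul_index, mul_assoc, ← sq] at h
  exact Nat.eq_of_mul_eq_mul_left Nat.card_pos (by exact_mod_cast h)

theorem nonempty_iso_of_simple : Nonempty (V ≅ W) := by
  by_contra hVW
  have h := card_mul_finrank_mul_finrank_eq hab hnd hV hW
  rw [if_neg hVW] at h
  simp [Nat.card_pos.ne', finrank_pos.ne'] at h

end Orthogonality

end FDRep

theorem statement_12_general
    (G : Type) [Group G] [Finite G]
    (Nsub : Subgroup G) (hN : Nsub.Normal)
    (hab : ∀ x y : G, ⁅x, y⁆ ∈ Nsub)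
    (χ : Nsub →* ℂˣ)
    (hstab : ∀ (g : G) (n : G) (hn : n ∈ Nsub),
      χ ⟨g * n * g⁻¹, hN.conj_mem n hn g⟩ = χ ⟨n, hn⟩) :
    -- well-definedness of `h_χ` on cosets:
    (∀ x x' y y' : G, x⁻¹ * x' ∈ Nsub → y⁻¹ * y' ∈ Nsub →
      χ ⟨⁅x, y⁆, hab x y⟩ = χ ⟨⁅x', y'⁆, hab x' y'⟩) ∧
    -- bilinearity:
    (∀ x y z : G, χ ⟨⁅x, y * z⁆, hab x (y * z)⟩ = χ ⟨⁅x, y⁆, hab x y⟩ * χ ⟨⁅x, z⁆, hab x z⟩) ∧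
    (∀ x y z : G, χ ⟨⁅x * y, z⁆, hab (x * y) z⟩ = χ ⟨⁅x, z⁆, hab x z⟩ * χ ⟨⁅y, z⁆, hab y z⟩) ∧
    -- alternating:
    (∀ x : G, χ ⟨⁅x, x⁆, hab x x⟩ = 1) ∧
    -- non-degeneracy implies existence and uniqueness of the Heisenberg lift:
    ((∀ x : G, (∀ y : G, χ ⟨⁅x, y⁆, hab x y⟩ = 1) → x ∈ Nsub) →
      ∃ V : FDRep ℂ G, Simple V ∧
        (∃ v : V, v ≠ 0 ∧ ∀ n : Nsub, V.ρ (n : G) v = (χ n : ℂ) • v) ∧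
        (Module.finrank ℂ V) ^ 2 = Nsub.index ∧
        ∀ W : FDRep ℂ G, Simple W →
          (∃ w : W, w ≠ 0 ∧ ∀ n : Nsub, W.ρ (n : G) w = (χ n : ℂ) • w) →
          Nonempty (W ≅ V)) := by
  refine ⟨fun x x' y y' => map_commutator_eq_of_inv_mul_mem hN χ hstab hab,
    map_commutator_mul_right hN χ hstab hab, map_commutator_mul_left hN χ hstab hab,
    fun x => (congrArg χ (Subtype.ext (commutatorElement_self x))).trans (map_one χ),
    fun hnd => ?_⟩
  obtain ⟨V, hV, hVχ⟩ := FDRep.exists_simple_forall_ρ_eq_smul hN hstab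
  obtain ⟨v, hv⟩ := exists_ne (0 : V)
  refine ⟨V, hV, ⟨v, hv, fun n => hVχ n v⟩, FDRep.finrank_sq_eq_index hab hnd hVχ,
    fun W hW ⟨w, hw, hwχ⟩ => ?_⟩
  exact FDRep.nonempty_iso_of_simple hab hnd
    (FDRep.forall_ρ_eq_smul_of_simple hN hstab hw hwχ) hVχ

/-- Heisenberg lift.  `G` finite, `N ◁ G` with `G/N` elementary abelian `p`
(encoded as: all commutators and all `p`-th powers lie in `N`), `χ` a `G`-stable linear
character of `N`.  Then `h_χ(xN,yN) = χ([x,y])` is a well-defined alternating bilinear form,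
and if it is non-degenerate there is (up to isomorphism) a unique irreducible representation
of `G` containing `χ` on restriction to `N`, of dimension `[G:N]^{1/2}`. -/
theorem statement_12
    (G : Type) [Group G] [Finite G] (p : ℕ) (hp : p.Prime)
    (Nsub : Subgroup G) (hN : Nsub.Normal)
    (hab : ∀ x y : G, ⁅x, y⁆ ∈ Nsub)
    (hpow : ∀ x : G, x ^ p ∈ Nsub)
    (χ : Nsub →* ℂˣ)
    (hstab : ∀ (g : G) (n : G) (hn : n ∈ Nsub),
      χ ⟨g * n * g⁻¹, hN.conj_mem n hn g⟩ = χ ⟨n, hn⟩) :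
    -- well-definedness of `h_χ` on cosets:
    (∀ x x' y y' : G, x⁻¹ * x' ∈ Nsub → y⁻¹ * y' ∈ Nsub →
      χ ⟨⁅x, y⁆, hab x y⟩ = χ ⟨⁅x', y'⁆, hab x' y'⟩) ∧
    -- bilinearity:
    (∀ x y z : G, χ ⟨⁅x, y * z⁆, hab x (y * z)⟩ = χ ⟨⁅x, y⁆, hab x y⟩ * χ ⟨⁅x, z⁆, hab x z⟩) ∧
    (∀ x y z : G, χ ⟨⁅x * y, z⁆, hab (x * y) z⟩ = χ ⟨⁅x, z⁆, hab x z⟩ * χ ⟨⁅y, z⁆, hab y z⟩) ∧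
    -- alternating:
    (∀ x : G, χ ⟨⁅x, x⁆, hab x x⟩ = 1) ∧
    -- non-degeneracy implies existence and uniqueness of the Heisenberg lift:
    ((∀ x : G, (∀ y : G, χ ⟨⁅x, y⁆, hab x y⟩ = 1) → x ∈ Nsub) →
      ∃ V : FDRep ℂ G, Simple V ∧
        (∃ v : V, v ≠ 0 ∧ ∀ n : Nsub, V.ρ (n : G) v = (χ n : ℂ) • v) ∧
        (Module.finrank ℂ V) ^ 2 = Nsub.index ∧
        ∀ W : FDRep ℂ G, Simple W →
          (∃ w : W, w ≠ 0 ∧ ∀ n : Nsub, W.ρ (n : G) w = (χ n : ℂ) • w) →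
          Nonempty (W ≅ V)) :=
  statement_12_general G Nsub hN hab χ hstab
end

section
/- Let r ≥ 3 be odd, l' = (r−1)/2, and β ∈ M_N(𝔬_r) regular with β̄ ∈ M_N(𝔽_q) its reduction. Then the reduction map C_{K^{l'}}(β) → C_{M_N(𝔽_q)}(β̄) sending 1 + ϖ^{l'}x to x̄ is surjective, where K^{l'} = 1 + 𝔭^{l'}M_N(𝔬_r). Consequently, the alternating form h_β(x̄,ȳ) = ψ_β([x,y]) on K^{l'}/(C∩K^{l'})K^l is non-degenerate, where l = l'+1. -/
open IsLocalRing

/-!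
Write `𝔬 = O ⧸ 𝔪 ^ r` and `π` for the image of `ϖ`. In a free `𝔬`-module the `π`-torsion is
`π ^ (r - 1)` times the module; applied to the free centraliser of `β` this lifts every matrix
commuting with `β` modulo `π` to one commuting with `β` exactly, which gives the surjectivity.

For the non-degeneracy write `u = 1 + π ^ l' • a`. As `2 l' = r - 1`, the commutator of `u` with
`v = 1 + π ^ l' • b` is `1 + π ^ (r - 1) • (a b - b a)`, and `ψ_β` takes the value
`ψ (tr ([β, a] b) / ϖ)` on it. Since `ψ` has conductor `𝔬`, triviality for all `b` forces
`[β, a] ≡ 0 mod π`, so `a ≡ c₀ mod π` with `c₀` in the centraliser, and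
`u = (1 + π ^ l' • c₀) w` with `w ∈ K^l`.
-/

theorem Matrix.exists_eq_smul_iff_forall_dvd {R m n : Type*} [Monoid R] (a : R)
    (M : Matrix m n R) : (∃ M', M = a • M') ↔ ∀ i j, a ∣ M i j := by
  refine ⟨?_, fun h ↦ ?_⟩
  · rintro ⟨M', rfl⟩ i j
    exact dvd_mul_right _ _
  · choose M' hM' using h
    exact ⟨Matrix.of M', Matrix.ext hM'⟩

theorem Matrix.trace_mul_commutator {R n : Type*} [CommRing R] [Fintype n]
    (A B C : Matrix n n R) : (B * (A * C - C * A)).trace = ((B * A - A * B) * C).trace := by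
  rw [Matrix.mul_sub, Matrix.sub_mul, Matrix.trace_sub, Matrix.trace_sub, Matrix.mul_assoc,
    ← Matrix.mul_assoc B C, Matrix.trace_mul_comm (B * C), Matrix.mul_assoc]

theorem Units.val_commutator_sub_one_of_pow_three_eq_zero {R A : Type*} [CommRing R] [Ring A]
    [Algebra R A] {ε : R} (hε : ε ^ 3 = 0) {u v : Aˣ} {a b : A}
    (hu : (u : A) = 1 + ε • a) (hv : (v : A) = 1 + ε • b) :
    ((u * v * u⁻¹ * v⁻¹ : Aˣ) : A) - 1 = ε ^ 2 • (a * b - b * a) := by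
  set Y := ε ^ 2 • (a * b - b * a)
  -- `Y * (1 + ε • c) = Y` because `ε ^ 3 = 0`.
  have hY : ∀ (w : Aˣ) (c : A), (w : A) = 1 + ε • c → Y * ↑w⁻¹ = Y := by
    intro w c hw
    rw [Units.mul_inv_eq_iff_eq_mul, hw, mul_add, mul_one, left_eq_add, smul_mul_smul_comm,
      ← pow_succ, hε, zero_smul]
  have hcomm : (u * v - v * u : A) = Y := by
    rw [hu, hv]
    simp only [Y, mul_add, add_mul, one_mul, mul_one, smul_mul_smul_comm, pow_two, smul_sub]
    abel
  calc ((u * v * u⁻¹ * v⁻¹ : Aˣ) : A) - 1 = (u * v - v * u : A) * ↑u⁻¹ * ↑v⁻¹ := by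
        simp only [Units.val_mul, sub_mul, Units.mul_inv_cancel_right, Units.mul_inv]
    _ = Y := by rw [hcomm, hY u a hu, hY v b hv]

section AddChar

variable {O K M : Type*} [CommRing O] [Field K] [Algebra O K] [IsFractionRing O K]
  [Monoid M] {ψ : AddChar K M} {ϖ : O}

theorem AddChar.map_div_pow_succ_eq_of_dvd (hψ : ∀ a : O, ψ (algebraMap O K a) = 1)
    (hϖ : ϖ ≠ 0) {k : ℕ} {a b : O} (h : ϖ ^ (k + 1) ∣ a - ϖ ^ k * b) :
    ψ (algebraMap O K a / algebraMap O K ϖ ^ (k + 1)) =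
      ψ (algebraMap O K b / algebraMap O K ϖ) := by
  obtain ⟨e, he⟩ := h
  have hϖK : algebraMap O K ϖ ≠ 0 := (map_ne_zero_iff _ (IsFractionRing.injective O K)).2 hϖ
  have : algebraMap O K a / algebraMap O K ϖ ^ (k + 1) =
      algebraMap O K b / algebraMap O K ϖ + algebraMap O K e := by
    rw [eq_add_of_sub_eq' he]
    field_simp
    simp only [map_add, map_mul, map_pow]
    ring
  rw [this, AddChar.map_add_eq_mul, hψ, mul_one]

variable [IsDomain O] [IsDiscreteValuationRing O]

theorem Irreducible.dvd_of_forall_addChar_mul_div_eq_one (hϖ : Irreducible ϖ)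
    (hψ : ∃ y : K, algebraMap O K ϖ * y ∈ Set.range (algebraMap O K) ∧ ψ y ≠ 1) {g : O}
    (hg : ∀ t : O, ψ (algebraMap O K (g * t) / algebraMap O K ϖ) = 1) : ϖ ∣ g := by
  by_contra hdvd
  obtain ⟨y, ⟨c, hc⟩, hy⟩ := hψ
  obtain ⟨u, rfl⟩ : IsUnit g := by
    rwa [← IsLocalRing.notMem_maximalIdeal, hϖ.maximalIdeal_eq, Ideal.mem_span_singleton]
  have hϖK : algebraMap O K ϖ ≠ 0 :=
    (map_ne_zero_iff _ (IsFractionRing.injective O K)).2 hϖ.ne_zero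
  apply hy
  rw [← hg (↑u⁻¹ * c), Units.mul_inv_cancel_left, hc, mul_div_cancel_left₀ _ hϖK]

theorem Irreducible.exists_eq_smul_of_forall_addChar_trace_mul_eq_one {n : Type*} [Fintype n]
    [DecidableEq n] (hϖ : Irreducible ϖ)
    (hψ : ∃ y : K, algebraMap O K ϖ * y ∈ Set.range (algebraMap O K) ∧ ψ y ≠ 1)
    {G : Matrix n n O} (hG : ∀ C, ψ (algebraMap O K (G * C).trace / algebraMap O K ϖ) = 1) :
    ∃ G', G = ϖ • G' :=
  (Matrix.exists_eq_smul_iff_forall_dvd ϖ G).2 fun i j ↦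
    hϖ.dvd_of_forall_addChar_mul_div_eq_one hψ fun t ↦ by
      simpa [Matrix.trace_mul_single] using hG (Matrix.single j i t)

end AddChar

namespace Irreducible

variable {O : Type*} [CommRing O] [IsDomain O] [IsDiscreteValuationRing O] {ϖ : O} {r : ℕ}
  {n : Type*}

local notation "𝔬" => O ⧸ maximalIdeal O ^ r

local notation "π" => Ideal.Quotient.mk (maximalIdeal O ^ r) ϖ

theorem mem_maximalIdeal_pow_iff (hϖ : Irreducible ϖ) {k : ℕ} {x : O} :
    x ∈ maximalIdeal O ^ k ↔ ϖ ^ k ∣ x := by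
  rw [hϖ.maximalIdeal_eq, Ideal.span_singleton_pow, Ideal.mem_span_singleton]

theorem pow_mk_eq_zero (hϖ : Irreducible ϖ) : π ^ r = 0 := by
  rw [← map_pow, Ideal.Quotient.eq_zero_iff_mem, hϖ.mem_maximalIdeal_pow_iff]

theorem pow_sub_dvd_of_pow_mul_mk_eq_zero (hϖ : Irreducible ϖ) {i : ℕ} {t : 𝔬}
    (h : π ^ i * t = 0) : π ^ (r - i) ∣ t := by
  rcases le_or_gt r i with hri | hir
  · rw [Nat.sub_eq_zero_of_le hri, pow_zero]
    exact one_dvd t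
  obtain ⟨t, rfl⟩ := Ideal.Quotient.mk_surjective t
  rw [← map_pow, ← map_mul, Ideal.Quotient.eq_zero_iff_mem, hϖ.mem_maximalIdeal_pow_iff,
    ← Nat.add_sub_cancel' hir.le, pow_add, mul_dvd_mul_iff_left (pow_ne_zero _ hϖ.ne_zero)] at h
  obtain ⟨e, rfl⟩ := h
  exact ⟨Ideal.Quotient.mk _ e, by rw [map_mul, map_pow]⟩

theorem map_maximalIdeal_pow_eq (hϖ : Irreducible ϖ) (k : ℕ) :
    Ideal.map (Ideal.Quotient.mk (maximalIdeal O ^ r)) (maximalIdeal O) ^ k =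
      Ideal.span {π ^ k} := by
  rw [← Ideal.span_singleton_pow, ← Set.image_singleton (f := Ideal.Quotient.mk _),
    ← Ideal.map_span, ← hϖ.maximalIdeal_eq]

theorem ker_factor_eq (hϖ : Irreducible ϖ) (h : maximalIdeal O ^ r ≤ maximalIdeal O) :
    RingHom.ker (Ideal.Quotient.factor h) = Ideal.span {π} := by
  rw [Ideal.Quotient.factor_ker, ← pow_one (Ideal.map _ _), hϖ.map_maximalIdeal_pow_eq, pow_one]

theorem forall_mem_map_maximalIdeal_pow_iff (hϖ : Irreducible ϖ) {k : ℕ} {X : Matrix n n 𝔬} :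
    (∀ i j, X i j ∈ Ideal.map (Ideal.Quotient.mk (maximalIdeal O ^ r)) (maximalIdeal O) ^ k) ↔
      ∃ X', X = π ^ k • X' := by
  simp only [hϖ.map_maximalIdeal_pow_eq, Ideal.mem_span_singleton,
    Matrix.exists_eq_smul_iff_forall_dvd]

theorem map_factor_eq_zero_iff (hϖ : Irreducible ϖ) (h : maximalIdeal O ^ r ≤ maximalIdeal O)
    {X : Matrix n n 𝔬} : X.map (Ideal.Quotient.factor h) = 0 ↔ ∃ X', X = π • X' := by
  simp only [Matrix.exists_eq_smul_iff_forall_dvd, ← Ideal.mem_span_singleton,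
    ← hϖ.ker_factor_eq h, RingHom.mem_ker]
  exact Matrix.ext_iff.symm

theorem exists_eq_pow_sub_smul_of_pow_smul_eq_zero (hϖ : Irreducible ϖ) {i : ℕ}
    {X : Matrix n n 𝔬} (h : π ^ i • X = 0) : ∃ X', X = π ^ (r - i) • X' :=
  (Matrix.exists_eq_smul_iff_forall_dvd _ X).2 fun j k ↦
    hϖ.pow_sub_dvd_of_pow_mul_mk_eq_zero (congrFun₂ h j k)

theorem exists_pow_pred_smul_eq_of_smul_eq_zero (hϖ : Irreducible ϖ) {ι M : Type*} [Fintype ι]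
    [AddCommGroup M] [Module 𝔬 M] (b : Module.Basis ι 𝔬 M) {x : M} (hx : π • x = 0) :
    ∃ y, π ^ (r - 1) • y = x := by
  have hcoord : ∀ i, π ^ (r - 1) ∣ b.repr x i := fun i ↦
    hϖ.pow_sub_dvd_of_pow_mul_mk_eq_zero (i := 1) <| by
      rw [pow_one, ← smul_eq_mul, ← Finsupp.smul_apply, ← map_smul, hx, map_zero,
        Finsupp.zero_apply]
  choose μ hμ using hcoord
  refine ⟨∑ i, μ i • b i, ?_⟩
  conv_rhs => rw [← b.sum_repr x]
  simp only [Finset.smul_sum, smul_smul, hμ]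

variable {K M : Type*} [Field K] [Algebra O K] [IsFractionRing O K] [Monoid M] {ψ : AddChar K M}
  [Fintype n]

theorem addChar_trace_map_pow_smul_eq (hϖ : Irreducible ϖ)
    (hψ : ∀ a : O, ψ (algebraMap O K a) = 1) {k : ℕ} (hk : r = k + 1)
    {s : 𝔬 → O} (hs : ∀ a, Ideal.Quotient.mk (maximalIdeal O ^ r) (s a) = a)
    {β X : Matrix n n 𝔬} {B X' : Matrix n n O}
    (hB : B.map (Ideal.Quotient.mk _) = β) (hX : X'.map (Ideal.Quotient.mk _) = X) :
    ψ (algebraMap O K (β.map s * (π ^ k • X).map s).trace / algebraMap O K ϖ ^ r) =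
      ψ (algebraMap O K (B * X').trace / algebraMap O K ϖ) := by
  subst hk
  have hmap : ∀ X : Matrix n n _,
      (X.map s).map (Ideal.Quotient.mk (maximalIdeal O ^ (k + 1))) = X :=
    fun X ↦ Matrix.ext fun _ _ ↦ hs _
  refine AddChar.map_div_pow_succ_eq_of_dvd hψ hϖ.ne_zero ?_
  rw [← hϖ.mem_maximalIdeal_pow_iff, ← Ideal.Quotient.eq, map_mul, map_pow,
    AddMonoidHom.map_trace, AddMonoidHom.map_trace, Matrix.map_mul, Matrix.map_mul, hmap, hmap,
    hB, hX, Matrix.mul_smul, Matrix.trace_smul, smul_eq_mul]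

variable [DecidableEq n]

theorem isUnit_one_add_pow_smul (hϖ : Irreducible ϖ) {l : ℕ} (hl : l ≠ 0) (X : Matrix n n 𝔬) :
    IsUnit (1 + π ^ l • X) :=
  IsNilpotent.isUnit_one_add ⟨r, by
    rw [smul_pow, ← pow_mul, mul_comm, pow_mul, hϖ.pow_mk_eq_zero, zero_pow hl, zero_smul]⟩

theorem exists_commute_sub_eq_smul (hϖ : Irreducible ϖ) (hr : r ≠ 0) {ι : Type*} [Fintype ι]
    {β : Matrix n n 𝔬} (b : Module.Basis ι 𝔬 (Subalgebra.centralizer 𝔬 {β}))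
    {z y : Matrix n n 𝔬} (hz : z * β - β * z = π • y) :
    ∃ c d, Commute c β ∧ c - z = π • d := by
  have hπ : π * π ^ (r - 1) = 0 := by
    rw [← pow_succ', Nat.sub_add_cancel (Nat.one_le_iff_ne_zero.2 hr), hϖ.pow_mk_eq_zero]
  -- `π ^ (r - 1) • z` lies in the centraliser and is killed by `π`, hence equals `π ^ (r - 1) • c`
  -- for some `c` in the centraliser; then `π ^ (r - 1) • (c - z) = 0` gives `c ≡ z mod π`.
  have hmem : π ^ (r - 1) • z ∈ Subalgebra.centralizer 𝔬 {β} := by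
    rintro g rfl
    rw [Matrix.mul_smul, Matrix.smul_mul, ← sub_eq_zero, ← smul_sub, ← neg_sub, hz, smul_neg,
      smul_smul, mul_comm, hπ, zero_smul, neg_zero]
  obtain ⟨c, hc⟩ := hϖ.exists_pow_pred_smul_eq_of_smul_eq_zero b (x := ⟨_, hmem⟩) <|
    Subtype.ext <| by
      simp only [SetLike.val_smul, smul_smul, hπ, zero_smul, ZeroMemClass.coe_zero]
  obtain ⟨d, hd⟩ := hϖ.exists_eq_pow_sub_smul_of_pow_smul_eq_zero (i := r - 1)
    (X := (c : Matrix n n 𝔬) - z) <| by rw [smul_sub, sub_eq_zero, ← SetLike.val_smul, hc]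
  refine ⟨c, d, (c.2 β rfl).symm, ?_⟩
  rwa [Nat.sub_sub_self (Nat.one_le_iff_ne_zero.2 hr), pow_one] at hd

theorem exists_commute_map_factor_eq (hϖ : Irreducible ϖ) (hr : r ≠ 0)
    (h : maximalIdeal O ^ r ≤ maximalIdeal O) {ι : Type*} [Fintype ι] {β : Matrix n n 𝔬}
    (b : Module.Basis ι 𝔬 (Subalgebra.centralizer 𝔬 {β}))
    {ybar : Matrix n n (O ⧸ maximalIdeal O)}
    (hybar : Commute ybar (β.map (Ideal.Quotient.factor h))) :
    ∃ x, Commute x β ∧ x.map (Ideal.Quotient.factor h) = ybar := by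
  set f := Ideal.Quotient.factor h
  have hf : ∀ X Y : Matrix n n 𝔬, (X - Y).map f = X.map f - Y.map f :=
    Matrix.map_sub _ (map_sub f)
  obtain ⟨z, rfl⟩ : ∃ z, z.map f = ybar :=
    ⟨ybar.map (Function.surjInv (Ideal.Quotient.factor_surjective h)),
      Matrix.ext fun _ _ ↦ Function.surjInv_eq _ _⟩
  obtain ⟨y, hy⟩ := (hϖ.map_factor_eq_zero_iff h (X := z * β - β * z)).1 <| by
    rw [hf, Matrix.map_mul, Matrix.map_mul, hybar.eq, sub_self]
  obtain ⟨c, d, hc, hd⟩ := hϖ.exists_commute_sub_eq_smul hr b hy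
  exact ⟨c, hc, sub_eq_zero.1 <| by rw [← hf]; exact (hϖ.map_factor_eq_zero_iff h).2 ⟨d, hd⟩⟩

theorem exists_mul_sub_mul_eq_smul_of_forall_addChar_eq_one (hϖ : Irreducible ϖ)
    (hψ₁ : ∀ a : O, ψ (algebraMap O K a) = 1)
    (hψ₂ : ∃ y : K, algebraMap O K ϖ * y ∈ Set.range (algebraMap O K) ∧ ψ y ≠ 1)
    {l : ℕ} (hl : l ≠ 0) (hr : r = 2 * l + 1)
    {s : 𝔬 → O} (hs : ∀ a, Ideal.Quotient.mk (maximalIdeal O ^ r) (s a) = a)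
    {β a : Matrix n n 𝔬} {u : (Matrix n n 𝔬)ˣ} (ha : (u : Matrix n n 𝔬) - 1 = π ^ l • a)
    (hpair : ∀ v : (Matrix n n 𝔬)ˣ, (∃ b, (v : Matrix n n 𝔬) - 1 = π ^ l • b) →
      ψ (algebraMap O K (β.map s * (((u * v * u⁻¹ * v⁻¹ : (Matrix n n 𝔬)ˣ) :
        Matrix n n 𝔬) - 1).map s).trace / algebraMap O K ϖ ^ r) = 1) :
    ∃ y, a * β - β * a = π • y := by
  set mk := Ideal.Quotient.mk (maximalIdeal O ^ r)
  have hmap : ∀ X : Matrix n n 𝔬, (X.map s).map mk = X := fun X ↦ Matrix.ext fun _ _ ↦ hs _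
  have hmk : ∀ X Y : Matrix n n O,
      (X * Y - Y * X).map mk = X.map mk * Y.map mk - Y.map mk * X.map mk := fun X Y ↦ by
    rw [Matrix.map_sub _ (map_sub mk), Matrix.map_mul, Matrix.map_mul]
  have hε : (π ^ l) ^ 3 = 0 := by
    rw [← pow_mul, show l * 3 = r + (l - 1) by omega, pow_add, hϖ.pow_mk_eq_zero, zero_mul]
  obtain ⟨G, hG⟩ := hϖ.exists_eq_smul_of_forall_addChar_trace_mul_eq_one hψ₂
    (G := β.map s * a.map s - a.map s * β.map s) fun C ↦ by
      obtain ⟨v, hv⟩ := hϖ.isUnit_one_add_pow_smul hl (C.map mk)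
      have h := hpair v ⟨_, by rw [hv, add_sub_cancel_left]⟩
      rwa [Units.val_commutator_sub_one_of_pow_three_eq_zero hε (eq_add_of_sub_eq' ha) hv,
        ← pow_mul, hϖ.addChar_trace_map_pow_smul_eq hψ₁ (by omega) hs (hmap β)
          (X' := a.map s * C - C * a.map s) (by rw [hmk, hmap]),
        Matrix.trace_mul_commutator] at h
  refine ⟨-G.map mk, ?_⟩
  have := congrArg (Matrix.map · mk) hG
  simp only [hmk, hmap, Matrix.map_smul' _ _ _ (map_mul mk)] at this
  rw [smul_neg, ← this, neg_sub]

theorem exists_mul_of_sub_eq_smul (hϖ : Irreducible ϖ) {l : ℕ} (hl : l ≠ 0)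
    {β a c₀ d : Matrix n n 𝔬} {u : (Matrix n n 𝔬)ˣ}
    (ha : (u : Matrix n n 𝔬) - 1 = π ^ l • a) (hc₀ : Commute c₀ β) (hd : c₀ - a = π • d) :
    ∃ c w : (Matrix n n 𝔬)ˣ, Commute (c : Matrix n n 𝔬) β ∧
      (∃ x, (c : Matrix n n 𝔬) - 1 = π ^ l • x) ∧
      (∃ y, (w : Matrix n n 𝔬) - 1 = π ^ (l + 1) • y) ∧ u = c * w := by
  obtain ⟨c, hc⟩ := hϖ.isUnit_one_add_pow_smul hl c₀
  refine ⟨c, c⁻¹ * u, hc ▸ (Commute.one_left β).add_left (hc₀.smul_left _),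
    ⟨c₀, by rw [hc, add_sub_cancel_left]⟩, ⟨-((↑c⁻¹ : Matrix n n 𝔬) * d), ?_⟩,
    (mul_inv_cancel_left c u).symm⟩
  calc ((c⁻¹ * u : (Matrix n n 𝔬)ˣ) : Matrix n n 𝔬) - 1
        = ↑c⁻¹ * ((u : Matrix n n 𝔬) - c) := by rw [Units.val_mul, mul_sub, Units.inv_mul]
    _ = ↑c⁻¹ * (π ^ l • -(c₀ - a)) := by
        rw [eq_add_of_sub_eq' ha, hc, add_sub_add_left_eq_sub, ← smul_sub, neg_sub]
    _ = π ^ (l + 1) • -(↑c⁻¹ * d) := by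
        rw [hd, smul_neg, smul_smul, ← pow_succ, Matrix.mul_neg, Matrix.mul_smul, smul_neg]

end Irreducible

/-- for `r ≥ 3` odd, `l' = (r-1)/2`, `l = l'+1` and `β ∈ M_N(𝔬_r)` regular, the
reduction map `C_{K^{l'}}(β) → C_{M_N(𝔽_q)}(β̄)`, `1 + ϖ^{l'}x ↦ x̄`, is surjective;
consequently the alternating form `h_β(x̄,ȳ) = ψ_β([x,y])` on `K^{l'}/(C ∩ K^{l'})K^l` is
non-degenerate (any `u ∈ K^{l'}` pairing trivially with all of `K^{l'}` lies in
`(C ∩ K^{l'})K^l`). -/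
theorem statement_19
    {O : Type*} [CommRing O] [IsDomain O] [IsDiscreteValuationRing O]
    (ϖ : O) (hϖ : Irreducible ϖ)
    (ψ : AddChar (FractionRing O) ℂ)
    (hψ1 : ∀ a : O, ψ (algebraMap O (FractionRing O) a) = 1)
    (hψ2 : ∃ y : FractionRing O,
      (algebraMap O (FractionRing O) ϖ) * y ∈ Set.range (algebraMap O (FractionRing O)) ∧
      ψ y ≠ 1)
    (r : ℕ) (hr : 3 ≤ r) (hodd : Odd r) (l' l : ℕ) (hl' : l' = (r - 1) / 2) (hl : l = l' + 1)
    (N : ℕ)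
    (pr : Ideal (O ⧸ (maximalIdeal O ^ r)))
    (hpr : pr = Ideal.map (Ideal.Quotient.mk (maximalIdeal O ^ r)) (maximalIdeal O))
    (red : (O ⧸ (maximalIdeal O ^ r)) →+* (O ⧸ maximalIdeal O))
    (hred : red = Ideal.Quotient.factor (S := maximalIdeal O ^ r) (T := maximalIdeal O)
      (Ideal.pow_le_self (by omega)))
    (β : Matrix (Fin N) (Fin N) (O ⧸ (maximalIdeal O ^ r)))
    -- regularity of `β`:
    (hreg : ∃ b : Module.Basis (Fin N) (O ⧸ (maximalIdeal O ^ r))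
      (Subalgebra.centralizer (O ⧸ (maximalIdeal O ^ r))
        ({β} : Set (Matrix (Fin N) (Fin N) (O ⧸ (maximalIdeal O ^ r))))), True)
    -- a set-theoretic section used to choose lifts, and the character `ψ_β(1+x) = Ψ β x`:
    (s : (O ⧸ (maximalIdeal O ^ r)) → O)
    (hs : ∀ a, Ideal.Quotient.mk (maximalIdeal O ^ r) (s a) = a)
    (Ψ : Matrix (Fin N) (Fin N) (O ⧸ (maximalIdeal O ^ r)) →
      Matrix (Fin N) (Fin N) (O ⧸ (maximalIdeal O ^ r)) → ℂ)
    (hΨ : ∀ b x, Ψ b x =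
      ψ (algebraMap O (FractionRing O) (Matrix.trace ((b.map s) * (x.map s))) /
        (algebraMap O (FractionRing O) ϖ) ^ r)) :
    -- surjectivity of `C_{K^{l'}}(β) → C_{M_N(𝔽_q)}(β̄)`:
    (∀ ybar : Matrix (Fin N) (Fin N) (O ⧸ maximalIdeal O),
      ybar * β.map red = β.map red * ybar →
      ∃ x : Matrix (Fin N) (Fin N) (O ⧸ (maximalIdeal O ^ r)),
        (1 + ((Ideal.Quotient.mk (maximalIdeal O ^ r) ϖ) ^ l') • x) * β =
          β * (1 + ((Ideal.Quotient.mk (maximalIdeal O ^ r) ϖ) ^ l') • x) ∧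
        x.map red = ybar) ∧
    -- non-degeneracy of `h_β` on `K^{l'}/(C ∩ K^{l'})K^l`:
    (∀ u : (Matrix (Fin N) (Fin N) (O ⧸ (maximalIdeal O ^ r)))ˣ,
      (∀ j k, ((u : Matrix (Fin N) (Fin N) (O ⧸ (maximalIdeal O ^ r))) - 1) j k ∈ pr ^ l') →
      (∀ v : (Matrix (Fin N) (Fin N) (O ⧸ (maximalIdeal O ^ r)))ˣ,
        (∀ j k, ((v : Matrix (Fin N) (Fin N) (O ⧸ (maximalIdeal O ^ r))) - 1) j k ∈ pr ^ l') →
        Ψ β (((u * v * u⁻¹ * v⁻¹ :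
          (Matrix (Fin N) (Fin N) (O ⧸ (maximalIdeal O ^ r)))ˣ) :
          Matrix (Fin N) (Fin N) (O ⧸ (maximalIdeal O ^ r))) - 1) = 1) →
      ∃ c w : (Matrix (Fin N) (Fin N) (O ⧸ (maximalIdeal O ^ r)))ˣ,
        (c : Matrix (Fin N) (Fin N) (O ⧸ (maximalIdeal O ^ r))) * β =
          β * (c : Matrix (Fin N) (Fin N) (O ⧸ (maximalIdeal O ^ r))) ∧
        (∀ j k, ((c : Matrix (Fin N) (Fin N) (O ⧸ (maximalIdeal O ^ r))) - 1) j k ∈ pr ^ l') ∧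
        (∀ j k, ((w : Matrix (Fin N) (Fin N) (O ⧸ (maximalIdeal O ^ r))) - 1) j k ∈ pr ^ l) ∧
        u = c * w) := by
  obtain ⟨b, -⟩ := hreg
  have hr₀ : r ≠ 0 := by omega
  have hl₀ : l' ≠ 0 := by omega
  have hr' : r = 2 * l' + 1 := by obtain ⟨m, rfl⟩ := hodd; omega
  subst hl hpr hred
  simp only [hϖ.forall_mem_map_maximalIdeal_pow_iff, hΨ]
  refine ⟨fun ybar hybar ↦ ?_, fun u ⟨a, ha⟩ hpair ↦ ?_⟩
  · obtain ⟨x, hx, rfl⟩ := hϖ.exists_commute_map_factor_eq hr₀ _ b hybar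
    exact ⟨x, (Commute.one_left β).add_left (hx.smul_left _), rfl⟩
  · obtain ⟨y, hy⟩ :=
      hϖ.exists_mul_sub_mul_eq_smul_of_forall_addChar_eq_one hψ1 hψ2 hl₀ hr' hs ha hpair
    obtain ⟨c₀, d, hc₀, hd⟩ := hϖ.exists_commute_sub_eq_smul hr₀ b hy
    exact hϖ.exists_mul_of_sub_eq_smul hl₀ ha hc₀ hd
end
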